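/- arXiv:1411.5670 — 9 statements merged into one kernel-verified Lean document; each statement's English description precedes it below -/
import Mathlib

section
/- Let H be a complex Hilbert space and let V and W be partial isometries on H. Then the product VW is a partial isometry if and only if the final projection W W* of W commutes with the initial projection V*V of V. -/
/-- If `P`, `Q` are self-adjoint idempotents in a C*-algebra and `P * Q` is
idempotent, then `P` and `Q` commute. -/
lemma proj_comm_of_idem {A : Type*} [NonUnitalNormedRing A] [StarRing A] [CStarRing A]
    (P Q : A) (hP : P * P = P) (hQ : Q * Q = Q) (hPs : star P = P) (hQs : star Q = Q)
    (hIdem : (P * Q) * (P * Q) = P * Q) : Q * P = P * Q := by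
  have hP2 : ∀ x : A, P * (P * x) = P * x := fun x => by rw [← mul_assoc, hP]
  have hQ2 : ∀ x : A, Q * (Q * x) = Q * x := fun x => by rw [← mul_assoc, hQ]
  have hI2 : ∀ x : A, P * (Q * (P * (Q * x))) = P * (Q * x) := fun x => by
    calc P * (Q * (P * (Q * x))) = ((P * Q) * (P * Q)) * x := by noncomm_ring
      _ = (P * Q) * x := by rw [hIdem]
      _ = P * (Q * x) := by noncomm_ring
  have hI1 : P * (Q * (P * Q)) = P * Q := by
    calc P * (Q * (P * Q)) = (P * Q) * (P * Q) := by noncomm_ring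
      _ = P * Q := hIdem
  have hA : star (P * Q - Q * (P * Q)) * (P * Q - Q * (P * Q)) = 0 := by
    simp only [star_sub, star_mul, hPs, hQs]
    simp only [sub_mul, mul_sub, mul_assoc, hP2, hQ2, hI2, hI1]
    abel
  have hA0 : P * Q - Q * (P * Q) = 0 := by
    rwa [CStarRing.star_mul_self_eq_zero_iff] at hA
  have hPQ : P * Q = Q * (P * Q) := sub_eq_zero.mp hA0
  have hQP : Q * P = Q * (P * Q) := by
    calc Q * P = star (P * Q) := by rw [star_mul, hPs, hQs]
      _ = star (Q * (P * Q)) := by rw [← hPQ]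
      _ = star (P * Q) * star Q := by rw [star_mul]
      _ = (Q * P) * Q := by rw [star_mul, hPs, hQs]
      _ = Q * (P * Q) := by rw [mul_assoc]
  rw [hQP]; exact hPQ.symm

/-- **Halmos–Wallen.** For partial isometries `V` and `W` on a complex Hilbert space,
the product `V * W` is a partial isometry if and only if the final projection
`W * star W` of `W` commutes with the initial projection `star V * V` of `V`. -/
theorem halmos_wallen {H : Type*} [NormedAddCommGroup H] [InnerProductSpace ℂ H]
    [CompleteSpace H] (V W : H →L[ℂ] H)
    (hV : V * star V * V = V) (hW : W * star W * W = W) :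
    ((V * W) * star (V * W) * (V * W) = V * W) ↔
      (W * star W) * (star V * V) = (star V * V) * (W * star W) := by
  constructor
  · intro h
    have hP : (star V * V) * (star V * V) = star V * V := by
      calc (star V * V) * (star V * V) = star V * (V * star V * V) := by noncomm_ring
        _ = star V * V := by rw [hV]
    have hQ : (W * star W) * (W * star W) = W * star W := by
      calc (W * star W) * (W * star W) = (W * star W * W) * star W := by noncomm_ring
        _ = W * star W := by rw [hW]
    have hPs : star (star V * V) = star V * V := by simp [star_mul]
    have hQs : star (W * star W) = W * star W := by simp [star_mul]
    have hIdem : ((star V * V) * (W * star W)) * ((star V * V) * (W * star W))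
        = (star V * V) * (W * star W) := by
      have e1 : ((star V * V) * (W * star W)) * ((star V * V) * (W * star W))
          = star V * ((V * W) * star (V * W) * (V * W)) * star W := by
        rw [star_mul]; noncomm_ring
      rw [e1, h]; noncomm_ring
    exact proj_comm_of_idem (star V * V) (W * star W) hP hQ hPs hQs hIdem
  · intro h
    calc (V * W) * star (V * W) * (V * W)
        = V * ((W * star W) * (star V * V)) * W := by rw [star_mul]; noncomm_ring
      _ = V * ((star V * V) * (W * star W)) * W := by rw [h]
      _ = (V * star V * V) * (W * star W * W) := by noncomm_ring
      _ = V * W := by rw [hV, hW]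
end

section
/- Let S be a semigroup of partial isometries on a complex Hilbert space H. Then for all S, T in S, the initial projection S*S commutes with the final projection T T*; that is, P(S) is contained in the commutant of Q(S) and Q(S) is contained in the commutant of P(S). -/
/-!
If `A`, `B` and `AB` are partial isometries, then `(A*A)(BB*)` is idempotent, since
`(A*A BB*)² = A* (AB)(AB)*(AB) B* = A*A BB*`. As a product of two orthogonal projections it is
also a contraction, and an idempotent contraction on a Hilbert space is an orthogonal projection,
hence self-adjoint: `A*A BB* = (A*A BB*)* = BB* A*A`.
-/

def IsPartialIsometry {R : Type*} [Mul R] [Star R] (a : R) : Prop :=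
  a * star a * a = a

namespace IsPartialIsometry

variable {R : Type*} [Semigroup R] [StarMul R] {a b : R}

theorem isStarProjection_star_mul_self (ha : IsPartialIsometry a) :
    IsStarProjection (star a * a) where
  isIdempotentElem := by
    rw [IsIdempotentElem, ← mul_assoc, mul_assoc (star a) a (star a), mul_assoc (star a), ha]
  isSelfAdjoint := .star_mul_self a

theorem isStarProjection_mul_star_self (ha : IsPartialIsometry a) :
    IsStarProjection (a * star a) where
  isIdempotentElem := by
    rw [IsIdempotentElem, ← mul_assoc, ha]
  isSelfAdjoint := .mul_star_self a

theorem isIdempotentElem_star_mul_self_mul_mul_star_self (hab : IsPartialIsometry (a * b)) :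
    IsIdempotentElem (star a * a * (b * star b)) := by
  have key : star a * (a * b * star (a * b) * (a * b)) * star b = star a * (a * b) * star b := by
    rw [hab]
  simpa only [IsIdempotentElem, star_mul, mul_assoc] using key

end IsPartialIsometry

namespace ContinuousLinearMap

variable {𝕜 E : Type*} [RCLike 𝕜] [NormedAddCommGroup E] [InnerProductSpace 𝕜 E] [CompleteSpace E]

theorem adjoint_apply_eq_of_apply_eq {T : E →L[𝕜] E} (hT : ‖T‖ ≤ 1) {x : E} (hx : T x = x) :
    adjoint T x = x := by
  refine eq_of_norm_le_re_inner_eq_norm_sq (𝕜 := 𝕜) ?_ ?_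
  · simpa using (adjoint T).le_of_opNorm_le ((adjoint.norm_map T).trans_le hT) x
  · rw [adjoint_inner_left, hx, inner_self_eq_norm_sq]

theorem IsIdempotentElem.isSelfAdjoint_of_norm_le_one {T : E →L[𝕜] E} (hT : IsIdempotentElem T)
    (hT₁ : ‖T‖ ≤ 1) : IsSelfAdjoint T := by
  have hfix : adjoint T * T = T := by
    ext x
    exact adjoint_apply_eq_of_apply_eq hT₁ (congr($hT x))
  have hstar : star T = star T * T := by
    simpa only [star_mul, star_star, ← star_eq_adjoint] using congr(star $hfix).symm
  rw [IsSelfAdjoint, hstar, star_eq_adjoint, hfix]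

theorem _root_.IsStarProjection.commute_of_isIdempotentElem_mul {p q : E →L[𝕜] E}
    (hp : IsStarProjection p) (hq : IsStarProjection q) (hpq : IsIdempotentElem (p * q)) :
    Commute p q := by
  have hnorm : ‖p * q‖ ≤ 1 := calc
    ‖p * q‖ ≤ ‖p‖ * ‖q‖ := norm_mul_le p q
    _ ≤ 1 := mul_le_one₀ (hp.norm_le p) (norm_nonneg q) (hq.norm_le q)
  have hsa := (IsIdempotentElem.isSelfAdjoint_of_norm_le_one hpq hnorm).star_eq
  rw [star_mul, hp.isSelfAdjoint.star_eq, hq.isSelfAdjoint.star_eq] at hsa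
  exact hsa.symm

end ContinuousLinearMap

/-- If `𝒮` is a semigroup of partial isometries on a complex Hilbert space, then
every initial projection `star A * A` (`A ∈ 𝒮`) commutes with every final projection
`B * star B` (`B ∈ 𝒮`); i.e. `P(𝒮) ⊆ Q(𝒮)'` and `Q(𝒮) ⊆ P(𝒮)'`. -/
theorem initial_commutes_final {H : Type*} [NormedAddCommGroup H] [InnerProductSpace ℂ H]
    [CompleteSpace H] (𝒮 : Set (H →L[ℂ] H))
    (hmul : ∀ A ∈ 𝒮, ∀ B ∈ 𝒮, A * B ∈ 𝒮)
    (hpi : ∀ A ∈ 𝒮, A * star A * A = A) :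
    ∀ A ∈ 𝒮, ∀ B ∈ 𝒮,
      (star A * A) * (B * star B) = (B * star B) * (star A * A) := by
  intro A hA B hB
  have hA' : IsPartialIsometry A := hpi A hA
  have hB' : IsPartialIsometry B := hpi B hB
  have hAB : IsPartialIsometry (A * B) := hpi _ (hmul A hA B hB)
  exact hA'.isStarProjection_star_mul_self.commute_of_isIdempotentElem_mul
    hB'.isStarProjection_mul_star_self hAB.isIdempotentElem_star_mul_self_mul_mul_star_self
end

section
/- Let S be a selfadjoint semigroup of partial isometries on a complex Hilbert space H, i.e. S is closed under composition, every element of S is a partial isometry, and S* = S. Then any two idempotent elements E, F of S commute: EF = FE. (Consequently S is an inverse semigroup.) -/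
/-- An idempotent partial isometry is self-adjoint. -/
lemma idem_pi_selfadjoint {H : Type*} [NormedAddCommGroup H] [InnerProductSpace ℂ H]
    [CompleteSpace H] (A : H →L[ℂ] H) (h1 : A * star A * A = A) (h2 : A * A = A) :
    star A = A := by
  have hs : star A * star A = star A := by rw [← star_mul, h2]
  have key : star (A - star A * A) * (A - star A * A) = 0 := by
    have e3 : star A * A * (star A * A) = star A * A := by
      calc star A * A * (star A * A) = star A * (A * star A * A) := by
            simp [mul_assoc]
        _ = star A * A := by rw [h1]
    have hstar : star (A - star A * A) = star A - star A * A := by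
      simp [star_sub, star_mul]
    rw [hstar, sub_mul, mul_sub, mul_sub, e3, ← mul_assoc (star A) (star A) A, hs,
      mul_assoc (star A) A A, h2]
    simp
  have h0 : A - star A * A = 0 := (CStarRing.star_mul_self_eq_zero_iff _).mp key
  have hA : A = star A * A := sub_eq_zero.mp h0
  calc star A = star (star A * A) := by rw [← hA]
    _ = star A * A := by rw [star_mul, star_star]
    _ = A := hA.symm

/-- In a selfadjoint semigroup `𝒮` of partial isometries on a complex Hilbert space,
any two idempotent elements commute (hence `𝒮` is an inverse semigroup). -/
theorem idempotents_commute {H : Type*} [NormedAddCommGroup H] [InnerProductSpace ℂ H]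
    [CompleteSpace H] (𝒮 : Set (H →L[ℂ] H))
    (hmul : ∀ A ∈ 𝒮, ∀ B ∈ 𝒮, A * B ∈ 𝒮)
    (hpi : ∀ A ∈ 𝒮, A * star A * A = A)
    (hstar : (fun T => star T) '' 𝒮 = 𝒮)
    (E F : H →L[ℂ] H) (hE : E ∈ 𝒮) (hF : F ∈ 𝒮)
    (hE2 : E * E = E) (hF2 : F * F = F) :
    E * F = F * E := by
  have hEs : star E = E := idem_pi_selfadjoint E (hpi E hE) hE2
  have hFs : star F = F := idem_pi_selfadjoint F (hpi F hF) hF2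
  have hEF : E * F ∈ 𝒮 := hmul E hE F hF
  have hF2' : ∀ x, F * (F * x) = F * x := fun x => by rw [← mul_assoc, hF2]
  have hE2' : ∀ x, E * (E * x) = E * x := fun x => by rw [← mul_assoc, hE2]
  have hEF2 : (E * F) * (E * F) = E * F := by
    have h := hpi (E * F) hEF
    rw [star_mul, hEs, hFs] at h
    simp only [mul_assoc] at h ⊢
    rw [hF2', hE2'] at h
    exact h
  have hsa : star (E * F) = E * F :=
    idem_pi_selfadjoint (E * F) (hpi (E * F) hEF) hEF2
  calc E * F = star (E * F) := hsa.symm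
    _ = F * E := by rw [star_mul, hEs, hFs]
end

section
/- Let S be a unital semigroup of partial isometries on a complex Hilbert space H such that P(S) = Q(S), i.e. {T*T : T in S} = {T T* : T in S} as sets. Then every element of the semigroup generated by S ∪ S* is a partial isometry. -/
section Aux
variable {R : Type*} [Ring R] [StarRing R]

/-- If `P`, `Q` are projections and `PQPQ = PQ`, then `PQ = QP`, provided
`z * star z = 0 → z = 0` (C*-property). -/
lemma aux_comm (P Q : R) (hPs : star P = P) (hP2 : P * P = P)
    (hQs : star Q = Q) (hQ2 : Q * Q = Q)
    (h : P * (Q * (P * Q)) = P * Q)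
    (hz : ∀ z : R, z * star z = 0 → z = 0) : P * Q = Q * P := by
  have hP2' : ∀ X : R, P * (P * X) = P * X := fun X => by rw [← mul_assoc, hP2]
  have hQ2' : ∀ X : R, Q * (Q * X) = Q * X := fun X => by rw [← mul_assoc, hQ2]
  have h' : ∀ X : R, P * (Q * (P * (Q * X))) = P * (Q * X) := by
    intro X
    calc P * (Q * (P * (Q * X))) = (P * (Q * (P * Q))) * X := by
          simp only [mul_assoc]
      _ = P * (Q * X) := by rw [h, mul_assoc]
  have hZ : (P * Q - P * (Q * P)) * star (P * Q - P * (Q * P)) = 0 := by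
    have hs : star (P * Q - P * (Q * P)) = Q * P - P * (Q * P) := by
      simp only [star_sub, star_mul, hPs, hQs, mul_assoc]
    rw [hs, mul_sub, sub_mul, sub_mul]
    simp only [mul_assoc, hP2', hQ2', h']
    abel
  have hZ0 : P * Q - P * (Q * P) = 0 := hz _ hZ
  have hPQ : P * Q = P * (Q * P) := by
    have := sub_eq_zero.mp hZ0
    exact this
  have hsa : star (P * Q) = P * Q := by
    conv_lhs => rw [hPQ]
    simp only [star_mul, hPs, hQs, mul_assoc]
    rw [hPQ]
  calc P * Q = star (P * Q) := hsa.symm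
    _ = Q * P := by simp only [star_mul, hPs, hQs]
end Aux

/-- Theorem 2.6: if `𝒮` is a unital semigroup of partial isometries with
`P(𝒮) = Q(𝒮)`, then every element of the semigroup generated by `𝒮 ∪ 𝒮*`
is a partial isometry. -/
theorem selfadjoint_extension_of_P_eq_Q {H : Type*} [NormedAddCommGroup H]
    [InnerProductSpace ℂ H] [CompleteSpace H] (𝒮 : Set (H →L[ℂ] H))
    (hmul : ∀ A ∈ 𝒮, ∀ B ∈ 𝒮, A * B ∈ 𝒮)
    (hone : (1 : H →L[ℂ] H) ∈ 𝒮)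
    (hpi : ∀ A ∈ 𝒮, A * star A * A = A)
    (hPQ : (fun T => star T * T) '' 𝒮 = (fun T => T * star T) '' 𝒮) :
    ∀ W ∈ Subsemigroup.closure (𝒮 ∪ (fun T => star T) '' 𝒮),
      W * star W * W = W := by
  set Pset : Set (H →L[ℂ] H) := (fun T => star T * T) '' 𝒮 with hPset
  have hz : ∀ z : H →L[ℂ] H, z * star z = 0 → z = 0 := fun z h =>
    (CStarRing.mul_star_self_eq_zero_iff z).mp h
  -- elements of Pset are projections
  have hPproj : ∀ P ∈ Pset, star P = P ∧ P * P = P := by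
    rintro _ ⟨A, hA, rfl⟩
    refine ⟨by simp [star_mul], ?_⟩
    have := congrArg (fun X => star A * X) (hpi A hA)
    simpa only [mul_assoc] using this
  -- elements of Pset commute pairwise
  have hcomm : ∀ P ∈ Pset, ∀ Q ∈ Pset, P * Q = Q * P := by
    rintro _ ⟨A, hA, rfl⟩ Q hQ
    have hQ' : Q ∈ (fun T => T * star T) '' 𝒮 := hPQ ▸ hQ
    obtain ⟨B, hB, rfl⟩ := hQ'
    obtain ⟨hPs, hP2⟩ := hPproj _ ⟨A, hA, rfl⟩
    obtain ⟨hQs, hQ2⟩ := hPproj _ hQ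
    apply aux_comm _ _ hPs hP2 hQs hQ2 _ hz
    have key := congrArg (fun X => star A * (X * star B)) (hpi (A * B) (hmul A hA B hB))
    simp only [star_mul, mul_assoc] at key
    simp only [mul_assoc]
    exact key
  -- conjugation stability
  have hconj : ∀ T ∈ 𝒮 ∪ (fun T => star T) '' 𝒮, ∀ P ∈ Pset,
      star T * (P * T) ∈ Pset := by
    rintro T hT P hP
    rcases hT with hT | ⟨A, hA, rfl⟩
    · obtain ⟨C, hC, rfl⟩ := hP
      refine ⟨C * T, hmul C hC T hT, ?_⟩
      simp only [star_mul, mul_assoc]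
    · have hP' : P ∈ (fun T => T * star T) '' 𝒮 := hPQ ▸ hP
      obtain ⟨D, hD, rfl⟩ := hP'
      exact hPQ.symm ▸ (⟨A * D, hmul A hA D hD, by
        simp only [star_mul, star_star, mul_assoc]⟩ :
        _ ∈ (fun T => T * star T) '' 𝒮)
  set Qc := Subsemigroup.closure Pset with hQc
  have hPsetQc : ∀ P ∈ Pset, P ∈ Qc := fun P hP => Subsemigroup.subset_closure hP
  -- Qc is commutative
  have hcommQc : ∀ x ∈ Qc, ∀ y ∈ Qc, x * y = y * x := by
    intro x hx y hy
    induction hx, hy using Subsemigroup.closure_induction₂ with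
    | mem a b ha hb => exact hcomm a ha b hb
    | mul_left a b c ha hb hc h1 h2 => rw [mul_assoc, h2, ← mul_assoc, h1, mul_assoc]
    | mul_right a b c ha hb hc h1 h2 => rw [← mul_assoc, h1, mul_assoc, h2, ← mul_assoc]
  -- Qc consists of projections
  have hprojQc : ∀ x ∈ Qc, star x = x ∧ x * x = x := by
    intro x hx
    induction hx using Subsemigroup.closure_induction with
    | mem a ha => exact hPproj a ha
    | mul a b ha hb iha ihb =>
      obtain ⟨has, ha2⟩ := iha
      obtain ⟨hbs, hb2⟩ := ihb
      have hc := hcommQc a ha b hb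
      constructor
      · rw [star_mul, has, hbs, hc]
      · calc a * b * (a * b) = a * (b * a) * b := by simp only [mul_assoc]
          _ = a * (a * b) * b := by rw [hc]
          _ = (a * a) * (b * b) := by simp only [mul_assoc]
          _ = a * b := by rw [ha2, hb2]
  -- generator facts
  have hTgen : ∀ T ∈ 𝒮 ∪ (fun T => star T) '' 𝒮,
      star T * T ∈ Qc ∧ T * star T ∈ Qc ∧ T * star T * T = T := by
    rintro T (hT | ⟨A, hA, rfl⟩)
    · refine ⟨hPsetQc _ ⟨T, hT, rfl⟩, hPsetQc _ ?_, hpi T hT⟩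
      exact hPQ.symm ▸ (⟨T, hT, rfl⟩ : _ ∈ (fun T => T * star T) '' 𝒮)
    · refine ⟨hPsetQc _ ?_, hPsetQc _ ⟨A, hA, by simp⟩, ?_⟩
      · exact hPQ.symm ▸ (⟨A, hA, by simp⟩ : _ ∈ (fun T => T * star T) '' 𝒮)
      · have := congrArg star (hpi A hA)
        simpa only [star_mul, star_star, mul_assoc] using this
  -- main induction
  have main : ∀ W ∈ Subsemigroup.closure (𝒮 ∪ (fun T => star T) '' 𝒮),
      star W * W ∈ Qc ∧ ∀ Q ∈ Qc, star W * (Q * W) ∈ Qc := by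
    intro W hW
    induction hW using Subsemigroup.closure_induction with
    | mem T hT =>
      refine ⟨(hTgen T hT).1, ?_⟩
      intro Q hQ
      induction hQ using Subsemigroup.closure_induction with
      | mem P hP => exact hPsetQc _ (hconj T hT P hP)
      | mul Q1 Q2 h1 h2 ih1 ih2 =>
        have hTT : T * star T ∈ Qc := (hTgen T hT).2.1
        have hc : Q1 * (T * star T) = (T * star T) * Q1 := hcommQc _ h1 _ hTT
        have hT3 : T * star T * T = T := (hTgen T hT).2.2
        have key : (star T * (Q1 * T)) * (star T * (Q2 * T)) = star T * (Q1 * Q2 * T) := by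
          calc (star T * (Q1 * T)) * (star T * (Q2 * T))
              = star T * ((Q1 * (T * star T)) * (Q2 * T)) := by simp only [mul_assoc]
            _ = star T * (((T * star T) * Q1) * (Q2 * T)) := by rw [hc]
            _ = (star T * (T * star T)) * (Q1 * (Q2 * T)) := by simp only [mul_assoc]
            _ = star T * (Q1 * Q2 * T) := by
                rw [show star T * (T * star T) = star T from by
                  have := congrArg star hT3
                  simpa only [star_mul, star_star, mul_assoc] using this]
                simp only [mul_assoc]
        rw [← key]
        exact Subsemigroup.mul_mem _ ih1 ih2
    | mul U V hU hV ihU ihV =>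
      constructor
      · have : star (U * V) * (U * V) = star V * ((star U * U) * V) := by
          simp only [star_mul, mul_assoc]
        rw [this]
        exact ihV.2 _ ihU.1
      · intro Q hQ
        have : star (U * V) * (Q * (U * V)) = star V * ((star U * (Q * U)) * V) := by
          simp only [star_mul, mul_assoc]
        rw [this]
        exact ihV.2 _ (ihU.2 Q hQ)
  -- conclude
  intro W hW
  obtain ⟨hE, -⟩ := main W hW
  obtain ⟨hEs, hE2⟩ := hprojQc _ hE
  set E := star W * W with hEdef
  have hE2' : ∀ X : H →L[ℂ] H, E * (E * X) = E * X := fun X => by rw [← mul_assoc, hE2]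
  have hWE : ∀ X : H →L[ℂ] H, star W * (W * X) = E * X := fun X => by
    rw [← mul_assoc, ← hEdef]
  have hZ : star (W * E - W) * (W * E - W) = 0 := by
    have hs : star (W * E - W) = E * star W - star W := by
      rw [star_sub, star_mul, hEs]
    rw [hs, sub_mul, mul_sub, mul_sub]
    simp only [mul_assoc, hWE, hE2', ← hEdef]
    rw [hE2]
    abel
  have hZ0 : W * E - W = 0 := by
    have := (CStarRing.star_mul_self_eq_zero_iff (W * E - W)).mp hZ
    exact this
  have : W * E = W := sub_eq_zero.mp hZ0
  calc W * star W * W = W * E := by rw [mul_assoc, ← hEdef]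
    _ = W := this
end

section
/- Let S be a unital semigroup of partial isometries on a complex Hilbert space H such that P(S) = Q(S), i.e. {T*T : T in S} = {T T* : T in S} as sets. Then for every element W of the semigroup generated by S ∪ S*, the operator W W* belongs to Q(S); that is, there exists X in S with W W* = X X*. -/
/-- Two projections whose product is idempotent commute (C*-algebra argument). -/
lemma proj_mul_comm_of_idem {A : Type*} [NonUnitalNormedRing A] [StarRing A] [CStarRing A]
    (P Q : A) (hP : star P = P) (hQ : star Q = Q) (hP2 : P * P = P) (hQ2 : Q * Q = Q)
    (h : P * Q * P * Q = P * Q) : P * Q = Q * P := by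
  set R0 := P * Q * P with hR0
  have hR0star : star R0 = R0 := by
    simp [hR0, star_mul, hP, hQ, mul_assoc]
  have hPQR0 : P * Q * R0 = R0 := by
    have : P * Q * (P * Q * P) = P * Q * P * Q * P := by noncomm_ring
    rw [hR0, this, h]
  have hR0QP : R0 * (Q * P) = R0 := by
    have := congrArg star hPQR0
    simpa [star_mul, hP, hQ, hR0star, mul_assoc] using this
  have hR02 : R0 * R0 = R0 := by
    have : (P * Q * P) * (P * Q * P) = P * Q * (P * P) * Q * P := by noncomm_ring
    rw [hR0, this, hP2]
    have : P * Q * P * Q * P = (P * Q * P * Q) * P := by noncomm_ring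
    rw [this, h]
  have key : (P * Q - R0) * star (P * Q - R0) = 0 := by
    have hstar : star (P * Q - R0) = Q * P - R0 := by
      simp [star_sub, star_mul, hP, hQ, hR0star]
    rw [hstar, sub_mul, mul_sub, mul_sub]
    have h1 : P * Q * (Q * P) = R0 := by
      have : P * Q * (Q * P) = P * (Q * Q) * P := by noncomm_ring
      rw [this, hQ2]
    rw [h1, hPQR0, hR0QP, hR02]
    abel
  have hzero : P * Q - R0 = 0 := (CStarRing.mul_star_self_eq_zero_iff _).mp key
  have hPQ : P * Q = R0 := by linear_combination (norm := abel) hzero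
  have hQP : Q * P = R0 := by
    have := congrArg star hPQ
    simpa [star_mul, hP, hQ, hR0star] using this
  rw [hPQ, hQP]

/-- If `𝒮` is a unital semigroup of partial isometries with `P(𝒮) = Q(𝒮)`, then
for every `W` in the semigroup generated by `𝒮 ∪ 𝒮*`, the operator `W W*` lies in
`Q(𝒮)`: there is `X ∈ 𝒮` with `W W* = X X*`. -/
theorem final_projection_in_Q_of_P_eq_Q {H : Type*} [NormedAddCommGroup H]
    [InnerProductSpace ℂ H] [CompleteSpace H] (𝒮 : Set (H →L[ℂ] H))
    (hmul : ∀ A ∈ 𝒮, ∀ B ∈ 𝒮, A * B ∈ 𝒮)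
    (hone : (1 : H →L[ℂ] H) ∈ 𝒮)
    (hpi : ∀ A ∈ 𝒮, A * star A * A = A)
    (hPQ : (fun T => star T * T) '' 𝒮 = (fun T => T * star T) '' 𝒮) :
    ∀ W ∈ Subsemigroup.closure (𝒮 ∪ (fun T => star T) '' 𝒮),
      ∃ X ∈ 𝒮, W * star W = X * star X := by
  -- E is the common set of initial/final projections
  set E : Set (H →L[ℂ] H) := (fun T => T * star T) '' 𝒮 with hE
  have hEone : (1 : H →L[ℂ] H) ∈ E := ⟨1, hone, by simp⟩
  -- Halmos–Wallen: initial projections commute with final projections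
  have hcommAB : ∀ A ∈ 𝒮, ∀ B ∈ 𝒮,
      (star A * A) * (B * star B) = (B * star B) * (star A * A) := by
    intro A hA B hB
    apply proj_mul_comm_of_idem
    · simp [star_mul]
    · simp [star_mul]
    · -- (A*A)(A*A) = A*A
      have : (star A * A) * (star A * A) = star A * (A * star A * A) := by noncomm_ring
      rw [this, hpi A hA]
    · have : (B * star B) * (B * star B) = (B * star B * B) * star B := by noncomm_ring
      rw [this, hpi B hB]
    · -- PQPQ = PQ using that AB is a partial isometry
      have hAB := hpi (A * B) (hmul A hA B hB)
      have expand : (star A * A) * (B * star B) * (star A * A) * (B * star B)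
          = star A * ((A * B) * star (A * B) * (A * B)) * star B := by
        simp only [star_mul]; noncomm_ring
      rw [expand, hAB]
      noncomm_ring
  -- elements of E commute
  have hEcomm : ∀ e ∈ E, ∀ f ∈ E, e * f = f * e := by
    intro e he f hf
    obtain ⟨A, hA, hAe⟩ : e ∈ (fun T => star T * T) '' 𝒮 := by rw [hPQ]; exact he
    obtain ⟨B, hB, hBf⟩ := hf
    rw [← hAe, ← hBf]
    exact hcommAB A hA B hB
  -- elements of E are idempotent
  have hEidem : ∀ e ∈ E, e * e = e := by
    rintro e ⟨B, hB, rfl⟩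
    have : (B * star B) * (B * star B) = (B * star B * B) * star B := by noncomm_ring
    simp only []
    rw [this, hpi B hB]
  -- conjugation A e A* stays in E
  have hconjQ : ∀ A ∈ 𝒮, ∀ e ∈ E, A * e * star A ∈ E := by
    rintro A hA e ⟨C, hC, rfl⟩
    refine ⟨A * C, hmul A hA C hC, ?_⟩
    simp only [star_mul]
    noncomm_ring
  -- conjugation A* e A stays in E
  have hconjP : ∀ A ∈ 𝒮, ∀ e ∈ E, star A * e * A ∈ E := by
    intro A hA e he
    obtain ⟨C, hC, hCe⟩ : e ∈ (fun T => star T * T) '' 𝒮 := by rw [hPQ]; exact he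
    rw [← hPQ]
    refine ⟨C * A, hmul C hC A hA, ?_⟩
    rw [← hCe]
    simp only [star_mul]
    noncomm_ring
  -- main induction over the closure
  intro W hW
  set p : (H →L[ℂ] H) → Prop := fun W =>
    (W * star W * W = W) ∧ (∀ e ∈ E, W * e * star W ∈ E) ∧ (∀ e ∈ E, star W * e * W ∈ E)
    with hp
  have main : p W := by
    refine Subsemigroup.closure_induction (p := fun x _ => p x) ?_ ?_ hW
    · rintro x (hx | ⟨A, hA, rfl⟩)
      · exact ⟨hpi x hx, fun e he => hconjQ x hx e he, fun e he => hconjP x hx e he⟩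
      · refine ⟨?_, ?_, ?_⟩
        · have := congrArg star (hpi A hA)
          simpa [star_mul, mul_assoc] using this
        · intro e he
          simpa using hconjP A hA e he
        · intro e he
          simpa using hconjQ A hA e he
      -- fallthrough handled
    · rintro x y hx hy ⟨hx1, hx2, hx3⟩ ⟨hy1, hy2, hy3⟩
      have hf : y * star y ∈ E := by simpa using hy2 1 hEone
      have hq : star x * x ∈ E := by simpa using hx3 1 hEone
      refine ⟨?_, ?_, ?_⟩
      · have expand : (x * y) * star (x * y) * (x * y)
            = x * ((y * star y) * (star x * x)) * y := by
          simp only [star_mul]; noncomm_ring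
        rw [expand, hEcomm _ hf _ hq]
        have regroup : x * ((star x * x) * (y * star y)) * y
            = (x * star x * x) * (y * star y * y) := by noncomm_ring
        rw [regroup, hx1, hy1]
      · intro e he
        have h1 : y * e * star y ∈ E := hy2 e he
        have h2 := hx2 _ h1
        have : (x * y) * e * star (x * y) = x * (y * e * star y) * star x := by
          simp only [star_mul]; noncomm_ring
        rw [this]; exact h2
      · intro e he
        have h1 : star x * e * x ∈ E := hx3 e he
        have h2 := hy3 _ h1
        have : star (x * y) * e * (x * y) = star y * (star x * e * x) * y := by
          simp only [star_mul]; noncomm_ring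
        rw [this]; exact h2
  obtain ⟨X, hX, hXe⟩ : W * star W ∈ E := by simpa using main.2.1 1 hEone
  exact ⟨X, hX, hXe.symm⟩
end

section
/- Let S be a unital semigroup of partial isometries on a complex Hilbert space H such that T*T ∈ S and T T* ∈ S for every T in S (i.e. P(S) ∪ Q(S) ⊆ S). Then every element of the semigroup generated by S ∪ S* is a partial isometry. -/
/-- An idempotent partial isometry is self-adjoint. -/
private lemma pi_idem_selfadjoint {H : Type*} [NormedAddCommGroup H]
    [InnerProductSpace ℂ H] [CompleteSpace H] {e : H →L[ℂ] H}
    (h2 : e * e = e) (hpi : e * star e * e = e) : star e = e := by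
  have hss : star e * star e = star e := by rw [← star_mul, h2]
  have h3 : star e * e * (star e * e) = star e * e := by
    have h : star e * e * (star e * e) = star e * (e * star e * e) := by noncomm_ring
    rw [h, hpi]
  have h4 : star e * (star e * e) = star e * e := by rw [← mul_assoc, hss]
  have h5 : star e * e * e = star e * e := by rw [mul_assoc, h2]
  have hx : star (e - star e * e) * (e - star e * e) = 0 := by
    have hstar : star (e - star e * e) = star e - star e * e := by
      simp [star_sub, star_mul]
    rw [hstar]
    simp only [sub_mul, mul_sub]
    rw [h3, h4, h5]
    abel
  have hze : e - star e * e = 0 := by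
    rwa [CStarRing.star_mul_self_eq_zero_iff] at hx
  have he : e = star e * e := by rwa [sub_eq_zero] at hze
  calc star e = star (star e * e) := by rw [← he]
    _ = star e * e := by rw [star_mul, star_star, ← he]
    _ = e := he.symm

/-- Corollary 2.7: if `𝒮` is a unital semigroup of partial isometries with
`P(𝒮) ∪ Q(𝒮) ⊆ 𝒮`, then every element of the semigroup generated by `𝒮 ∪ 𝒮*`
is a partial isometry. -/
theorem selfadjoint_extension_of_projections_mem {H : Type*} [NormedAddCommGroup H]
    [InnerProductSpace ℂ H] [CompleteSpace H] (𝒮 : Set (H →L[ℂ] H))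
    (hmul : ∀ A ∈ 𝒮, ∀ B ∈ 𝒮, A * B ∈ 𝒮)
    (hone : (1 : H →L[ℂ] H) ∈ 𝒮)
    (hpi : ∀ A ∈ 𝒮, A * star A * A = A)
    (hP : ∀ T ∈ 𝒮, star T * T ∈ 𝒮)
    (hQ : ∀ T ∈ 𝒮, T * star T ∈ 𝒮) :
    ∀ W ∈ Subsemigroup.closure (𝒮 ∪ (fun T => star T) '' 𝒮),
      W * star W * W = W := by
  -- `isP p` : `p` is a projection belonging to `𝒮`.
  set isP : (H →L[ℂ] H) → Prop := fun p => p ∈ 𝒮 ∧ star p = p ∧ p * p = p with hisP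
  -- projections in `𝒮` commute
  have hcomm : ∀ p q, isP p → isP q → p * q = q * p := by
    rintro p q ⟨hpS, hps, hp2⟩ ⟨hqS, hqs, hq2⟩
    have hpqS : p * q ∈ 𝒮 := hmul p hpS q hqS
    have hpqpi : (p * q) * star (p * q) * (p * q) = p * q := hpi _ hpqS
    have hstar : star (p * q) = q * p := by rw [star_mul, hps, hqs]
    have e1 : (p * q) * (q * p) * (p * q) = p * q := by rw [← hstar]; exact hpqpi
    have h2 : (p * q) * (p * q) = p * q := by
      calc (p * q) * (p * q) = p * (q * q) * (p * p) * q := by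
            rw [hq2, hp2]; noncomm_ring
        _ = (p * q) * (q * p) * (p * q) := by noncomm_ring
        _ = p * q := e1
    have hsa : star (p * q) = p * q := pi_idem_selfadjoint h2 hpqpi
    rw [← hsa, hstar]
  have hPone : isP 1 := ⟨hone, star_one _, one_mul 1⟩
  -- initial and final projections of elements of `𝒮` are in `isP`
  have hinit : ∀ T ∈ 𝒮, isP (star T * T) := by
    intro T hT
    refine ⟨hP T hT, by simp [star_mul], ?_⟩
    calc star T * T * (star T * T) = star T * (T * star T * T) := by noncomm_ring
      _ = star T * T := by rw [hpi T hT]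
  have hfin : ∀ T ∈ 𝒮, isP (T * star T) := by
    intro T hT
    refine ⟨hQ T hT, by simp [star_mul], ?_⟩
    calc T * star T * (T * star T) = (T * star T * T) * star T := by noncomm_ring
      _ = T * star T := by rw [hpi T hT]
  have hpistar : ∀ T ∈ 𝒮, star T * T * star T = star T := by
    intro T hT
    have := congrArg star (hpi T hT)
    simpa [star_mul, star_star, mul_assoc] using this
  -- conjugation of a projection in `𝒮` by an element of `𝒮` stays in `isP`
  have hconj : ∀ T ∈ 𝒮, ∀ p, isP p → isP (T * p * star T) := by
    intro T hT p hp
    obtain ⟨hpS, hps, hp2⟩ := hp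
    have hmem : T * p * star T ∈ 𝒮 := by
      have h : (T * p) * star (T * p) = T * p * star T := by
        rw [star_mul, hps]
        calc (T * p) * (p * star T) = T * (p * p) * star T := by noncomm_ring
          _ = T * p * star T := by rw [hp2]
      rw [← h]
      exact hQ _ (hmul T hT p hpS)
    refine ⟨hmem, by simp [star_mul, hps, mul_assoc], ?_⟩
    have hc : p * (star T * T) = (star T * T) * p := hcomm p _ ⟨hpS, hps, hp2⟩ (hinit T hT)
    calc T * p * star T * (T * p * star T)
        = T * (p * (star T * T)) * p * star T := by noncomm_ring
      _ = T * ((star T * T) * p) * p * star T := by rw [hc]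
      _ = (T * star T * T) * (p * p) * star T := by noncomm_ring
      _ = T * p * star T := by rw [hpi T hT, hp2]
  have hconj' : ∀ T ∈ 𝒮, ∀ p, isP p → isP (star T * p * T) := by
    intro T hT p hp
    obtain ⟨hpS, hps, hp2⟩ := hp
    have hmem : star T * p * T ∈ 𝒮 := by
      have h : star (p * T) * (p * T) = star T * p * T := by
        rw [star_mul, hps]
        calc (star T * p) * (p * T) = star T * (p * p) * T := by noncomm_ring
          _ = star T * p * T := by rw [hp2]
      rw [← h]
      exact hP _ (hmul p hpS T hT)
    refine ⟨hmem, by simp [star_mul, hps, mul_assoc], ?_⟩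
    have hc : p * (T * star T) = (T * star T) * p := hcomm p _ ⟨hpS, hps, hp2⟩ (hfin T hT)
    calc star T * p * T * (star T * p * T)
        = star T * (p * (T * star T)) * p * T := by noncomm_ring
      _ = star T * ((T * star T) * p) * p * T := by rw [hc]
      _ = (star T * T * star T) * (p * p) * T := by noncomm_ring
      _ = star T * p * T := by rw [hpistar T hT, hp2]
  -- main induction over the closure
  intro W hW
  have main : ∀ W, W ∈ Subsemigroup.closure (𝒮 ∪ (fun T => star T) '' 𝒮) →
      (W * star W * W = W) ∧ (∀ p, isP p → isP (W * p * star W)) ∧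
      (∀ p, isP p → isP (star W * p * W)) := by
    intro W hW
    induction hW using Subsemigroup.closure_induction with
    | mem x hx =>
        rcases hx with hx | ⟨A, hA, rfl⟩
        · exact ⟨hpi x hx, fun p hp => hconj x hx p hp, fun p hp => hconj' x hx p hp⟩
        · refine ⟨?_, fun p hp => by simpa using hconj' A hA p hp,
            fun p hp => by simpa using hconj A hA p hp⟩
          simpa [star_star, mul_assoc] using hpistar A hA
    | mul x y hx hy ihx ihy =>
        obtain ⟨hxpi, hxc, hxc'⟩ := ihx
        obtain ⟨hypi, hyc, hyc'⟩ := ihy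
        have ha : isP (y * star y) := by simpa using hyc 1 hPone
        have hb : isP (star x * x) := by simpa using hxc' 1 hPone
        have hab : (y * star y) * (star x * x) = (star x * x) * (y * star y) :=
          hcomm _ _ ha hb
        refine ⟨?_, ?_, ?_⟩
        · calc x * y * star (x * y) * (x * y)
              = x * ((y * star y) * (star x * x)) * y := by rw [star_mul]; noncomm_ring
            _ = x * ((star x * x) * (y * star y)) * y := by rw [hab]
            _ = (x * star x * x) * (y * star y * y) := by noncomm_ring
            _ = x * y := by rw [hxpi, hypi]
        · intro p hp
          have h : x * y * p * star (x * y) = x * (y * p * star y) * star x := by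
            rw [star_mul]; noncomm_ring
          rw [h]
          exact hxc _ (hyc p hp)
        · intro p hp
          have h : star (x * y) * p * (x * y) = star y * (star x * p * x) * y := by
            rw [star_mul]; noncomm_ring
          rw [h]
          exact hyc' _ (hxc' p hp)
  exact (main W hW).1
end

section
/- Let S be a unital semigroup of partial isometries on a complex Hilbert space H such that the von Neumann algebra generated by Q(S) = {T T* : T in S} is a maximal abelian selfadjoint subalgebra of B(H); equivalently, the commutant Q(S)' equals the double commutant Q(S)''. Then every element of the semigroup generated by S ∪ S* is a partial isometry. -/
/-- Two projections whose product is idempotent commute. -/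
private lemma aux_proj_comm {H : Type*} [NormedAddCommGroup H]
    [InnerProductSpace ℂ H] [CompleteSpace H] {P Q : H →L[ℂ] H}
    (hPs : star P = P) (hP : P * P = P) (hQs : star Q = Q) (hQ : Q * Q = Q)
    (hE : (P * Q) * (P * Q) = P * Q) : P * Q = Q * P := by
  have hP' : ∀ x : H →L[ℂ] H, P * (P * x) = P * x := fun x => by rw [← mul_assoc, hP]
  have hQ' : ∀ x : H →L[ℂ] H, Q * (Q * x) = Q * x := fun x => by rw [← mul_assoc, hQ]
  have hE' : ∀ x : H →L[ℂ] H, P * (Q * (P * (Q * x))) = P * (Q * x) := fun x => by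
    have h := congrArg (· * x) hE
    simpa [mul_assoc] using h
  have h0 : (P * Q - P * (Q * P)) * star (P * Q - P * (Q * P)) = 0 := by
    have hs : star (P * Q - P * (Q * P)) = Q * P - P * (Q * P) := by
      simp [star_sub, star_mul, hPs, hQs, mul_assoc]
    rw [hs, sub_mul, mul_sub, mul_sub]
    simp only [mul_assoc, hP', hQ', hE']
    abel
  have h1 : P * Q - P * (Q * P) = 0 :=
    (CStarRing.mul_star_self_eq_zero_iff _).mp h0
  have h2 : P * Q = P * (Q * P) := sub_eq_zero.mp h1
  have h3 : star (P * Q) = P * Q := by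
    rw [h2]
    simp [star_mul, hPs, hQs, mul_assoc]
  have h4 : Q * P = star (P * Q) := by rw [star_mul, hPs, hQs]
  rw [h4]; exact h3.symm

/-- If `A`, `B` and `A*B` are partial isometries, then the initial projection of `A`
commutes with the final projection of `B`. -/
private lemma aux_comm_of_pi {H : Type*} [NormedAddCommGroup H]
    [InnerProductSpace ℂ H] [CompleteSpace H] {A B : H →L[ℂ] H}
    (hA : A * star A * A = A) (hB : B * star B * B = B)
    (hAB : (A * B) * star (A * B) * (A * B) = A * B) :
    (star A * A) * (B * star B) = (B * star B) * (star A * A) := by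
  have hA' : A * (star A * A) = A := by rw [← mul_assoc]; exact hA
  have hB' : B * (star B * B) = B := by rw [← mul_assoc]; exact hB
  apply aux_proj_comm
  · simp [star_mul]
  · -- (star A * A) * (star A * A) = star A * A
    calc (star A * A) * (star A * A) = star A * (A * (star A * A)) := by
          simp only [mul_assoc]
      _ = star A * A := by rw [hA']
  · simp [star_mul]
  · -- (B * star B) * (B * star B) = B * star B
    calc (B * star B) * (B * star B) = B * (star B * B) * star B := by
          simp only [mul_assoc]
      _ = B * star B := by rw [hB']
  · -- idempotency of the product of the two projections
    have h := congrArg (fun x => star A * (x * star B)) hAB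
    simpa [star_mul, mul_assoc] using h

/-- If the initial projection of `A` commutes with the final projection of `B`,
then `A*B` is a partial isometry. -/
private lemma aux_pi_mul {H : Type*} [NormedAddCommGroup H]
    [InnerProductSpace ℂ H] [CompleteSpace H] {A B : H →L[ℂ] H}
    (hA : A * star A * A = A) (hB : B * star B * B = B)
    (hcomm : (star A * A) * (B * star B) = (B * star B) * (star A * A)) :
    (A * B) * star (A * B) * (A * B) = A * B := by
  have hA' : A * (star A * A) = A := by rw [← mul_assoc]; exact hA
  calc (A * B) * star (A * B) * (A * B)
      = A * (((B * star B) * (star A * A)) * B) := by simp only [star_mul, mul_assoc]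
    _ = A * (((star A * A) * (B * star B)) * B) := by rw [hcomm]
    _ = (A * (star A * A)) * ((B * star B) * B) := by simp only [mul_assoc]
    _ = A * B := by rw [hA', hB]

/-- Corollary 2.8: if `𝒮` is a unital semigroup of partial isometries such that the
von Neumann algebra generated by `Q(𝒮)` is a masa (equivalently, the commutant of
`Q(𝒮)` equals its double commutant), then every element of the semigroup generated
by `𝒮 ∪ 𝒮*` is a partial isometry. -/
theorem selfadjoint_extension_of_masa {H : Type*} [NormedAddCommGroup H]
    [InnerProductSpace ℂ H] [CompleteSpace H] (𝒮 : Set (H →L[ℂ] H))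
    (hmul : ∀ A ∈ 𝒮, ∀ B ∈ 𝒮, A * B ∈ 𝒮)
    (hone : (1 : H →L[ℂ] H) ∈ 𝒮)
    (hpi : ∀ A ∈ 𝒮, A * star A * A = A)
    (hmasa : Set.centralizer ((fun T => T * star T) '' 𝒮) =
      Set.centralizer (Set.centralizer ((fun T => T * star T) '' 𝒮))) :
    ∀ W ∈ Subsemigroup.closure (𝒮 ∪ (fun T => star T) '' 𝒮),
      W * star W * W = W := by
  set Qs : Set (H →L[ℂ] H) := (fun T => T * star T) '' 𝒮 with hQs
  set M : Set (H →L[ℂ] H) := Set.centralizer Qs with hM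
  -- Q(𝒮) ⊆ M
  have QsubM : Qs ⊆ M := by
    rw [hmasa]
    exact Set.subset_centralizer_centralizer
  -- M is abelian
  have habel : ∀ a ∈ M, ∀ b ∈ M, a * b = b * a := by
    intro a ha b hb
    have hb' : b ∈ Set.centralizer M := by rw [← hmasa]; exact hb
    exact hb' a ha
  -- F1 : final projections lie in M
  have F1 : ∀ T ∈ 𝒮, T * star T ∈ M := fun T hT => QsubM ⟨T, hT, rfl⟩
  -- F2 : initial projections lie in M
  have F2 : ∀ T ∈ 𝒮, star T * T ∈ M := by
    intro T hT
    intro q hq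
    obtain ⟨S, hS, rfl⟩ := hq
    exact (aux_comm_of_pi (hpi T hT) (hpi S hS) (hpi _ (hmul T hT S hS))).symm
  -- F3 : M is stable under conjugation by star T * · * T
  have F3 : ∀ T ∈ 𝒮, ∀ m ∈ M, star T * m * T ∈ M := by
    intro T hT m hm
    intro q hq
    obtain ⟨S, hS, rfl⟩ := hq
    set ss := S * star S with hss_def
    have hss : ss ∈ Qs := ⟨S, hS, rfl⟩
    set q' := T * ss * star T with hq'_def
    have hTT : T * (star T * T) = T := by rw [← mul_assoc]; exact hpi T hT
    have hcomm1 : ss * (star T * T) = (star T * T) * ss := F2 T hT ss hss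
    have hTss : T * ss = (T * ss) * (star T * T) := by
      calc T * ss = (T * (star T * T)) * ss := by rw [hTT]
        _ = T * ((star T * T) * ss) := by simp only [mul_assoc]
        _ = T * (ss * (star T * T)) := by rw [← hcomm1]
        _ = (T * ss) * (star T * T) := by simp only [mul_assoc]
    have hq'T : q' * T = T * ss := by
      calc q' * T = (T * ss) * (star T * T) := by simp only [hq'_def, mul_assoc]
        _ = T * ss := hTss.symm
    have hTT2 : star T * (T * star T) = star T := by
      have h := congrArg star (hpi T hT)
      simpa [star_mul, mul_assoc] using h
    have hssT : ss * star T = star T * q' := by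
      calc ss * star T = ss * (star T * (T * star T)) := by rw [hTT2]
        _ = (ss * (star T * T)) * star T := by simp only [mul_assoc]
        _ = ((star T * T) * ss) * star T := by rw [hcomm1]
        _ = star T * q' := by simp only [hq'_def, mul_assoc]
    have hq'Q : q' ∈ Qs := ⟨T * S, hmul T hT S hS, by simp [hq'_def, hss_def, star_mul, mul_assoc]⟩
    have hmq' : q' * m = m * q' := hm q' hq'Q
    calc ss * (star T * m * T) = (ss * star T) * (m * T) := by simp only [mul_assoc]
      _ = (star T * q') * (m * T) := by rw [hssT]
      _ = star T * ((q' * m) * T) := by simp only [mul_assoc]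
      _ = star T * ((m * q') * T) := by rw [hmq']
      _ = (star T * m) * (q' * T) := by simp only [mul_assoc]
      _ = (star T * m) * (T * ss) := by rw [hq'T]
      _ = (star T * m * T) * ss := by simp only [mul_assoc]
  -- F4 : M is stable under conjugation by T * · * star T
  have F4 : ∀ T ∈ 𝒮, ∀ m ∈ M, T * m * star T ∈ M := by
    intro T hT m hm
    intro q hq
    obtain ⟨S, hS, rfl⟩ := hq
    set ss := S * star S with hss_def
    have hss : ss ∈ Qs := ⟨S, hS, rfl⟩
    set p := star T * ss * T with hp_def
    have hpM : p ∈ M := F3 T hT ss (QsubM hss)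
    have hTT2 : star T * (T * star T) = star T := by
      have h := congrArg star (hpi T hT)
      simpa [star_mul, mul_assoc] using h
    have hcomm2 : ss * (T * star T) = (T * star T) * ss := by
      have hTTQ : T * star T ∈ M := F1 T hT
      exact hTTQ ss hss
    have hTss2 : star T * ss = (star T * ss) * (T * star T) := by
      calc star T * ss = (star T * (T * star T)) * ss := by rw [hTT2]
        _ = star T * ((T * star T) * ss) := by simp only [mul_assoc]
        _ = star T * (ss * (T * star T)) := by rw [← hcomm2]
        _ = (star T * ss) * (T * star T) := by simp only [mul_assoc]
    have hpT : p * star T = star T * ss := by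
      calc p * star T = (star T * ss) * (T * star T) := by simp only [hp_def, mul_assoc]
        _ = star T * ss := hTss2.symm
    have hTT : T * (star T * T) = T := by rw [← mul_assoc]; exact hpi T hT
    have hTp : ss * T = T * p := by
      calc ss * T = ss * (T * (star T * T)) := by rw [hTT]
        _ = (ss * (T * star T)) * T := by simp only [mul_assoc]
        _ = ((T * star T) * ss) * T := by rw [hcomm2]
        _ = T * p := by simp only [hp_def, mul_assoc]
    have hmp : p * m = m * p := habel p hpM m hm
    calc ss * (T * m * star T) = (ss * T) * (m * star T) := by simp only [mul_assoc]
      _ = (T * p) * (m * star T) := by rw [hTp]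
      _ = T * ((p * m) * star T) := by simp only [mul_assoc]
      _ = T * ((m * p) * star T) := by rw [hmp]
      _ = (T * m) * (p * star T) := by simp only [mul_assoc]
      _ = (T * m) * (star T * ss) := by rw [hpT]
      _ = (T * m * star T) * ss := by simp only [mul_assoc]
  -- the normalizer predicate
  let pred : (H →L[ℂ] H) → Prop := fun W =>
    W * star W * W = W ∧ W * star W ∈ M ∧ star W * W ∈ M ∧
      (∀ m ∈ M, W * m * star W ∈ M) ∧ (∀ m ∈ M, star W * m * W ∈ M)
  have hmulN : ∀ W X, pred W → pred X → pred (W * X) := by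
    rintro W X ⟨hW, hWf, hWi, hWc, hWc'⟩ ⟨hX, hXf, hXi, hXc, hXc'⟩
    have hcomm : (star W * W) * (X * star X) = (X * star X) * (star W * W) :=
      habel _ hWi _ hXf
    refine ⟨aux_pi_mul hW hX hcomm, ?_, ?_, ?_, ?_⟩
    · have h : (W * X) * star (W * X) = W * (X * star X) * star W := by
        simp [star_mul, mul_assoc]
      rw [h]; exact hWc _ hXf
    · have h : star (W * X) * (W * X) = star X * (star W * W) * X := by
        simp [star_mul, mul_assoc]
      rw [h]; exact hXc' _ hWi
    · intro m hm
      have h : (W * X) * m * star (W * X) = W * (X * m * star X) * star W := by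
        simp [star_mul, mul_assoc]
      rw [h]; exact hWc _ (hXc m hm)
    · intro m hm
      have h : star (W * X) * m * (W * X) = star X * (star W * m * W) * X := by
        simp [star_mul, mul_assoc]
      rw [h]; exact hXc' _ (hWc' m hm)
  have hS_N : ∀ T ∈ 𝒮, pred T := fun T hT =>
    ⟨hpi T hT, F1 T hT, F2 T hT, F4 T hT, F3 T hT⟩
  have hSstar_N : ∀ T ∈ 𝒮, pred (star T) := by
    intro T hT
    refine ⟨?_, ?_, ?_, ?_, ?_⟩
    · have h := congrArg star (hpi T hT)
      simp only [star_mul, star_star] at h ⊢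
      simpa [mul_assoc] using h
    · simpa [star_star] using F2 T hT
    · simpa [star_star] using F1 T hT
    · intro m hm
      simpa [star_star] using F3 T hT m hm
    · intro m hm
      simpa [star_star] using F4 T hT m hm
  let N : Subsemigroup (H →L[ℂ] H) :=
    { carrier := {W | pred W}
      mul_mem' := fun {a b} ha hb => hmulN a b ha hb }
  have hsub : (𝒮 ∪ (fun T => star T) '' 𝒮) ⊆ ↑N := by
    rintro W (hW | ⟨T, hT, rfl⟩)
    · exact hS_N W hW
    · exact hSstar_N T hT
  have hle : Subsemigroup.closure (𝒮 ∪ (fun T => star T) '' 𝒮) ≤ N :=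
    Subsemigroup.closure_le.mpr hsub
  intro W hW
  exact (hle hW).1
end

section
/- Let S be a unital semigroup of partial isometries on a complex Hilbert space H that is maximal, in the sense that every semigroup of partial isometries on H containing S equals S. If the family P(S) ∪ Q(S) = {T*T : T in S} ∪ {T T* : T in S} is commutative, then S is selfadjoint: S = S*. -/
section Helpers

variable {M : Type*} [Monoid M]

private lemma comm_left {s : Set M} {b : M} (hb : ∀ a ∈ s, a * b = b * a) :
    ∀ x ∈ Submonoid.closure s, x * b = b * x := by
  intro x hx
  induction hx using Submonoid.closure_induction with
  | mem a ha => exact hb a ha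
  | one => rw [one_mul, mul_one]
  | mul x y hx hy ihx ihy => rw [mul_assoc, ihy, ← mul_assoc, ihx, mul_assoc]

private lemma clos_comm {s : Set M} (h : ∀ a ∈ s, ∀ b ∈ s, a * b = b * a) :
    ∀ x ∈ Submonoid.closure s, ∀ y ∈ Submonoid.closure s, x * y = y * x := by
  intro x hx y hy
  have h1 : ∀ a ∈ s, a * x = x * a := fun a ha =>
    (comm_left (fun c hc => h c hc a ha) x hx).symm
  exact (comm_left h1 y hy).symm

private lemma clos_star [StarMul M] {s : Set M} (hs : ∀ a ∈ s, star a = a)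
    (h : ∀ a ∈ s, ∀ b ∈ s, a * b = b * a) :
    ∀ x ∈ Submonoid.closure s, star x = x := by
  intro x hx
  induction hx using Submonoid.closure_induction with
  | mem a ha => exact hs a ha
  | one => exact star_one M
  | mul x y hx hy ihx ihy =>
      rw [star_mul, ihx, ihy]
      exact clos_comm h y hy x hx

private lemma clos_idem {s : Set M} (hs : ∀ a ∈ s, a * a = a)
    (h : ∀ a ∈ s, ∀ b ∈ s, a * b = b * a) :
    ∀ x ∈ Submonoid.closure s, x * x = x := by
  intro x hx
  induction hx using Submonoid.closure_induction with
  | mem a ha => exact hs a ha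
  | one => exact one_mul 1
  | mul x y hx hy ihx ihy =>
      have hc : y * x = x * y := clos_comm h y hy x hx
      calc x * y * (x * y) = x * (y * x) * y := by simp only [mul_assoc]
        _ = x * (x * y) * y := by rw [hc]
        _ = x * x * (y * y) := by simp only [mul_assoc]
        _ = x * y := by rw [ihx, ihy]

private lemma conj_mem_closure {s t : Set M} {A B : M}
    (hAB : A * B ∈ Submonoid.closure t)
    (hmem : ∀ x ∈ s, A * x * B ∈ Submonoid.closure t)
    (hcomm : ∀ y ∈ s, B * A * y = y * (B * A))
    (habs : B * A * B = B) :
    ∀ x ∈ Submonoid.closure s, A * x * B ∈ Submonoid.closure t := by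
  intro x hx
  induction hx using Submonoid.closure_induction with
  | mem a ha => exact hmem a ha
  | one => rwa [mul_one]
  | mul x y hx hy ihx ihy =>
      have hy' : B * A * y = y * (B * A) :=
        (comm_left (fun a ha => (hcomm a ha).symm) y hy).symm
      have key : (A * x * B) * (A * y * B) = A * (x * y) * B := by
        calc (A * x * B) * (A * y * B)
            = A * x * (B * A * y) * B := by simp only [mul_assoc]
          _ = A * x * (y * (B * A)) * B := by rw [hy']
          _ = A * (x * y) * (B * A * B) := by simp only [mul_assoc]
          _ = A * (x * y) * B := by rw [habs]
      rw [← key]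
      exact mul_mem ihx ihy

end Helpers

section Main

variable {M : Type*} [Monoid M] [StarMul M]

theorem star_image_eq_of_max (𝒮 : Set M)
    (hmul : ∀ A ∈ 𝒮, ∀ B ∈ 𝒮, A * B ∈ 𝒮)
    (hone : (1 : M) ∈ 𝒮)
    (hpi : ∀ A ∈ 𝒮, A * star A * A = A)
    (hmax : ∀ ℛ : Set M,
      (∀ A ∈ ℛ, ∀ B ∈ ℛ, A * B ∈ ℛ) → (∀ A ∈ ℛ, A * star A * A = A) →
      𝒮 ⊆ ℛ → ℛ = 𝒮)
    (hPQcomm : ∀ A ∈ ((fun T => star T * T) '' 𝒮 ∪ (fun T => T * star T) '' 𝒮),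
      ∀ B ∈ ((fun T => star T * T) '' 𝒮 ∪ (fun T => T * star T) '' 𝒮),
        A * B = B * A) :
    (fun T => star T) '' 𝒮 = 𝒮 := by
  have hsss : ∀ S ∈ 𝒮, star S * S * star S = star S := by
    intro S hS
    simpa [star_mul, star_star, mul_assoc] using congrArg star (hpi S hS)
  -- basic facts about P and Q elements
  have hPself : ∀ x ∈ (fun T : M => star T * T) '' 𝒮, star x = x := by
    rintro x ⟨T, hT, rfl⟩
    simp [star_mul, star_star]
  have hQself : ∀ x ∈ (fun T : M => T * star T) '' 𝒮, star x = x := by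
    rintro x ⟨T, hT, rfl⟩
    simp [star_mul, star_star]
  have hPidem : ∀ x ∈ (fun T : M => star T * T) '' 𝒮, x * x = x := by
    rintro x ⟨T, hT, rfl⟩
    show (star T * T) * (star T * T) = star T * T
    calc (star T * T) * (star T * T) = star T * (T * star T * T) := by
          simp only [mul_assoc]
      _ = star T * T := by rw [hpi T hT]
  have hQidem : ∀ x ∈ (fun T : M => T * star T) '' 𝒮, x * x = x := by
    rintro x ⟨T, hT, rfl⟩
    show (T * star T) * (T * star T) = T * star T
    calc (T * star T) * (T * star T) = T * (star T * T * star T) := by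
          simp only [mul_assoc]
      _ = T * star T := by rw [hsss T hT]
  ---------------------------------------------------------------------------
  -- Step 1 : every `T * star T` (and products thereof) belongs to 𝒮
  ---------------------------------------------------------------------------
  have hDQcomm : ∀ b ∈ ((fun T : M => star T * T) '' 𝒮 ∪ (fun T : M => T * star T) '' 𝒮),
      ∀ D ∈ Submonoid.closure ((fun T : M => T * star T) '' 𝒮), D * b = b * D := by
    intro b hb D hD
    exact comm_left (fun a ha => hPQcomm a (Or.inr ha) b hb) D hD
  have hQcommQ : ∀ a ∈ (fun T : M => T * star T) '' 𝒮,
      ∀ b ∈ (fun T : M => T * star T) '' 𝒮, a * b = b * a :=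
    fun a ha b hb => hPQcomm a (Or.inr ha) b (Or.inr hb)
  have hDQstar := clos_star hQself hQcommQ
  have hDQidem := clos_idem hQidem hQcommQ
  have hDQconj : ∀ S ∈ 𝒮, ∀ D ∈ Submonoid.closure ((fun T : M => T * star T) '' 𝒮),
      S * D * star S ∈ Submonoid.closure ((fun T : M => T * star T) '' 𝒮) := by
    intro S hS
    refine conj_mem_closure ?_ ?_ ?_ (hsss S hS)
    · exact Submonoid.subset_closure ⟨S, hS, rfl⟩
    · rintro x ⟨T, hT, rfl⟩
      have e : S * (T * star T) * star S = (S * T) * star (S * T) := by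
        rw [star_mul]; simp only [mul_assoc]
      rw [e]
      exact Submonoid.subset_closure ⟨S * T, hmul S hS T hT, rfl⟩
    · intro y hy
      exact hPQcomm _ (Or.inl ⟨S, hS, rfl⟩) y (Or.inr hy)
  have hR1 : {X : M | ∃ D ∈ Submonoid.closure ((fun T : M => T * star T) '' 𝒮),
      ∃ S ∈ 𝒮, X = D * S} = 𝒮 := by
    apply hmax
    · rintro X ⟨D₁, hD₁, S₁, hS₁, rfl⟩ Y ⟨D₂, hD₂, S₂, hS₂, rfl⟩
      refine ⟨D₁ * (S₁ * D₂ * star S₁), mul_mem hD₁ (hDQconj S₁ hS₁ D₂ hD₂),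
        S₁ * S₂, hmul S₁ hS₁ S₂ hS₂, ?_⟩
      have h2 : D₂ * (star S₁ * S₁) = (star S₁ * S₁) * D₂ :=
        hDQcomm _ (Or.inl ⟨S₁, hS₁, rfl⟩) D₂ hD₂
      exact (calc (D₁ * (S₁ * D₂ * star S₁)) * (S₁ * S₂)
          = D₁ * (S₁ * (D₂ * (star S₁ * S₁))) * S₂ := by simp only [mul_assoc]
        _ = D₁ * (S₁ * ((star S₁ * S₁) * D₂)) * S₂ := by rw [h2]
        _ = D₁ * ((S₁ * star S₁ * S₁) * D₂) * S₂ := by simp only [mul_assoc]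
        _ = D₁ * (S₁ * D₂) * S₂ := by rw [hpi S₁ hS₁]
        _ = D₁ * S₁ * (D₂ * S₂) := by simp only [mul_assoc]).symm
    · rintro X ⟨D, hD, S, hS, rfl⟩
      have hDst := hDQstar D hD
      have hDid := hDQidem D hD
      have hcm : D * (S * star S) = (S * star S) * D :=
        hDQcomm _ (Or.inr ⟨S, hS, rfl⟩) D hD
      calc D * S * star (D * S) * (D * S)
          = D * S * (star S * D) * (D * S) := by rw [star_mul, hDst]
        _ = D * ((S * star S) * (D * D)) * S := by simp only [mul_assoc]
        _ = D * ((S * star S) * D) * S := by rw [hDid]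
        _ = D * (D * (S * star S)) * S := by rw [← hcm]
        _ = (D * D) * (S * star S * S) := by simp only [mul_assoc]
        _ = D * S := by rw [hDid, hpi S hS]
    · intro S hS
      exact ⟨1, one_mem _, S, hS, (one_mul S).symm⟩
  have hQsub : ∀ D ∈ Submonoid.closure ((fun T : M => T * star T) '' 𝒮), D ∈ 𝒮 := by
    intro D hD
    have hmem : D ∈ {X : M | ∃ D ∈ Submonoid.closure ((fun T : M => T * star T) '' 𝒮),
        ∃ S ∈ 𝒮, X = D * S} := ⟨D, hD, 1, hone, (mul_one D).symm⟩
    rwa [hR1] at hmem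
  ---------------------------------------------------------------------------
  -- Step 2 : every `star T * T` (and products thereof) belongs to 𝒮
  ---------------------------------------------------------------------------
  have hDPcomm : ∀ b ∈ ((fun T : M => star T * T) '' 𝒮 ∪ (fun T : M => T * star T) '' 𝒮),
      ∀ D ∈ Submonoid.closure ((fun T : M => star T * T) '' 𝒮), D * b = b * D := by
    intro b hb D hD
    exact comm_left (fun a ha => hPQcomm a (Or.inl ha) b hb) D hD
  have hPcommP : ∀ a ∈ (fun T : M => star T * T) '' 𝒮,
      ∀ b ∈ (fun T : M => star T * T) '' 𝒮, a * b = b * a :=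
    fun a ha b hb => hPQcomm a (Or.inl ha) b (Or.inl hb)
  have hDPstar := clos_star hPself hPcommP
  have hDPidem := clos_idem hPidem hPcommP
  have hDPconj : ∀ S ∈ 𝒮, ∀ D ∈ Submonoid.closure ((fun T : M => star T * T) '' 𝒮),
      star S * D * S ∈ Submonoid.closure ((fun T : M => star T * T) '' 𝒮) := by
    intro S hS
    refine conj_mem_closure ?_ ?_ ?_ (hpi S hS)
    · exact Submonoid.subset_closure ⟨S, hS, rfl⟩
    · rintro x ⟨T, hT, rfl⟩
      have e : star S * (star T * T) * S = star (T * S) * (T * S) := by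
        rw [star_mul]; simp only [mul_assoc]
      rw [e]
      exact Submonoid.subset_closure ⟨T * S, hmul T hT S hS, rfl⟩
    · intro y hy
      exact hPQcomm _ (Or.inr ⟨S, hS, rfl⟩) y (Or.inl hy)
  have hR2 : {X : M | ∃ S ∈ 𝒮, ∃ D ∈ Submonoid.closure ((fun T : M => star T * T) '' 𝒮),
      X = S * D} = 𝒮 := by
    apply hmax
    · rintro X ⟨S₁, hS₁, D₁, hD₁, rfl⟩ Y ⟨S₂, hS₂, D₂, hD₂, rfl⟩
      refine ⟨S₁ * S₂, hmul S₁ hS₁ S₂ hS₂,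
        (star S₂ * D₁ * S₂) * D₂, mul_mem (hDPconj S₂ hS₂ D₁ hD₁) hD₂, ?_⟩
      have h2 : D₁ * (S₂ * star S₂) = (S₂ * star S₂) * D₁ :=
        hDPcomm _ (Or.inr ⟨S₂, hS₂, rfl⟩) D₁ hD₁
      exact (calc (S₁ * S₂) * ((star S₂ * D₁ * S₂) * D₂)
          = S₁ * ((S₂ * star S₂) * D₁) * (S₂ * D₂) := by simp only [mul_assoc]
        _ = S₁ * (D₁ * (S₂ * star S₂)) * (S₂ * D₂) := by rw [← h2]
        _ = S₁ * D₁ * ((S₂ * star S₂ * S₂) * D₂) := by simp only [mul_assoc]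
        _ = S₁ * D₁ * (S₂ * D₂) := by rw [hpi S₂ hS₂]).symm
    · rintro X ⟨S, hS, D, hD, rfl⟩
      have hDst := hDPstar D hD
      have hDid := hDPidem D hD
      have hcm : D * (star S * S) = (star S * S) * D :=
        hDPcomm _ (Or.inl ⟨S, hS, rfl⟩) D hD
      calc S * D * star (S * D) * (S * D)
          = S * D * (D * star S) * (S * D) := by rw [star_mul, hDst]
        _ = S * ((D * D) * (star S * S)) * D := by simp only [mul_assoc]
        _ = S * (D * (star S * S)) * D := by rw [hDid]
        _ = S * ((star S * S) * D) * D := by rw [hcm]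
        _ = (S * star S * S) * (D * D) := by simp only [mul_assoc]
        _ = S * D := by rw [hpi S hS, hDid]
    · intro S hS
      exact ⟨S, hS, 1, one_mem _, (mul_one S).symm⟩
  have hPsub : ∀ D ∈ Submonoid.closure ((fun T : M => star T * T) '' 𝒮), D ∈ 𝒮 := by
    intro D hD
    have hmem : D ∈ {X : M | ∃ S ∈ 𝒮,
        ∃ D ∈ Submonoid.closure ((fun T : M => star T * T) '' 𝒮), X = S * D} :=
      ⟨1, hone, D, hD, (one_mul D).symm⟩
    rwa [hR2] at hmem
  ---------------------------------------------------------------------------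
  -- Step 3 : the closure of P ∪ Q and its conjugation invariance
  ---------------------------------------------------------------------------
  have hPQ𝒮 : ∀ x ∈ ((fun T : M => star T * T) '' 𝒮 ∪ (fun T : M => T * star T) '' 𝒮),
      x ∈ 𝒮 := by
    rintro x (hx | hx)
    · exact hPsub x (Submonoid.subset_closure hx)
    · exact hQsub x (Submonoid.subset_closure hx)
  have hPQstar : ∀ x ∈ ((fun T : M => star T * T) '' 𝒮 ∪ (fun T : M => T * star T) '' 𝒮),
      star x = x := by
    rintro x (hx | hx)
    · exact hPself x hx
    · exact hQself x hx
  have hPQidem : ∀ x ∈ ((fun T : M => star T * T) '' 𝒮 ∪ (fun T : M => T * star T) '' 𝒮),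
      x * x = x := by
    rintro x (hx | hx)
    · exact hPidem x hx
    · exact hQidem x hx
  have hD3comm := clos_comm hPQcomm
  have hD3conjR : ∀ S ∈ 𝒮, ∀ D ∈ Submonoid.closure
        ((fun T : M => star T * T) '' 𝒮 ∪ (fun T : M => T * star T) '' 𝒮),
      S * D * star S ∈ Submonoid.closure
        ((fun T : M => star T * T) '' 𝒮 ∪ (fun T : M => T * star T) '' 𝒮) := by
    intro S hS
    refine conj_mem_closure ?_ ?_ ?_ (hsss S hS)
    · exact Submonoid.subset_closure (Or.inr ⟨S, hS, rfl⟩)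
    · intro x hx
      have hx𝒮 := hPQ𝒮 x hx
      have e : (S * x) * star (S * x) = S * x * star S := by
        rw [star_mul, hPQstar x hx]
        calc (S * x) * (x * star S) = S * (x * x) * star S := by simp only [mul_assoc]
          _ = S * x * star S := by rw [hPQidem x hx]
      have hmem : (S * x) * star (S * x) ∈ Submonoid.closure
          ((fun T : M => star T * T) '' 𝒮 ∪ (fun T : M => T * star T) '' 𝒮) :=
        Submonoid.subset_closure (Or.inr ⟨S * x, hmul S hS x hx𝒮, rfl⟩)
      rwa [e] at hmem
    · intro y hy
      exact hPQcomm _ (Or.inl ⟨S, hS, rfl⟩) y hy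
  have hD3conjL : ∀ S ∈ 𝒮, ∀ D ∈ Submonoid.closure
        ((fun T : M => star T * T) '' 𝒮 ∪ (fun T : M => T * star T) '' 𝒮),
      star S * D * S ∈ Submonoid.closure
        ((fun T : M => star T * T) '' 𝒮 ∪ (fun T : M => T * star T) '' 𝒮) := by
    intro S hS
    refine conj_mem_closure ?_ ?_ ?_ (hpi S hS)
    · exact Submonoid.subset_closure (Or.inl ⟨S, hS, rfl⟩)
    · intro x hx
      have hx𝒮 := hPQ𝒮 x hx
      have e : star (x * S) * (x * S) = star S * x * S := by
        rw [star_mul, hPQstar x hx]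
        calc (star S * x) * (x * S) = star S * (x * x) * S := by simp only [mul_assoc]
          _ = star S * x * S := by rw [hPQidem x hx]
      have hmem : star (x * S) * (x * S) ∈ Submonoid.closure
          ((fun T : M => star T * T) '' 𝒮 ∪ (fun T : M => T * star T) '' 𝒮) :=
        Submonoid.subset_closure (Or.inl ⟨x * S, hmul x hx𝒮 S hS, rfl⟩)
      rwa [e] at hmem
    · intro y hy
      exact hPQcomm _ (Or.inr ⟨S, hS, rfl⟩) y hy
  ---------------------------------------------------------------------------
  -- Step 4 : the big star-closed semigroup
  ---------------------------------------------------------------------------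
  have hR3 : {V : M | V * star V * V = V ∧ ∀ D ∈ Submonoid.closure
        ((fun T : M => star T * T) '' 𝒮 ∪ (fun T : M => T * star T) '' 𝒮),
        V * D * star V ∈ Submonoid.closure
          ((fun T : M => star T * T) '' 𝒮 ∪ (fun T : M => T * star T) '' 𝒮) ∧
        star V * D * V ∈ Submonoid.closure
          ((fun T : M => star T * T) '' 𝒮 ∪ (fun T : M => T * star T) '' 𝒮)} = 𝒮 := by
    apply hmax
    · rintro V ⟨hVpi, hVc⟩ W ⟨hWpi, hWc⟩
      constructor
      · have hVV : star V * V ∈ Submonoid.closure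
            ((fun T : M => star T * T) '' 𝒮 ∪ (fun T : M => T * star T) '' 𝒮) := by
          have h := (hVc 1 (one_mem _)).2
          rwa [mul_one] at h
        have hWW : W * star W ∈ Submonoid.closure
            ((fun T : M => star T * T) '' 𝒮 ∪ (fun T : M => T * star T) '' 𝒮) := by
          have h := (hWc 1 (one_mem _)).1
          rwa [mul_one] at h
        have hc : (W * star W) * (star V * V) = (star V * V) * (W * star W) :=
          hD3comm _ hWW _ hVV
        calc V * W * star (V * W) * (V * W)
            = V * W * (star W * star V) * (V * W) := by rw [star_mul]
          _ = V * ((W * star W) * (star V * V)) * W := by simp only [mul_assoc]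
          _ = V * ((star V * V) * (W * star W)) * W := by rw [hc]
          _ = (V * star V * V) * (W * star W * W) := by simp only [mul_assoc]
          _ = V * W := by rw [hVpi, hWpi]
      · intro D hD
        constructor
        · have e : V * W * D * star (V * W) = V * (W * D * star W) * star V := by
            rw [star_mul]; simp only [mul_assoc]
          rw [e]
          exact (hVc _ (hWc D hD).1).1
        · have e : star (V * W) * D * (V * W) = star W * (star V * D * V) * W := by
            rw [star_mul]; simp only [mul_assoc]
          rw [e]
          exact (hWc _ (hVc D hD).2).2
    · exact fun A hA => hA.1
    · intro S hS
      exact ⟨hpi S hS, fun D hD => ⟨hD3conjR S hS D hD, hD3conjL S hS D hD⟩⟩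
  have hstar𝒮 : ∀ V ∈ 𝒮, star V ∈ 𝒮 := by
    intro V hV
    have hV3 : V ∈ {V : M | V * star V * V = V ∧ ∀ D ∈ Submonoid.closure
        ((fun T : M => star T * T) '' 𝒮 ∪ (fun T : M => T * star T) '' 𝒮),
        V * D * star V ∈ Submonoid.closure
          ((fun T : M => star T * T) '' 𝒮 ∪ (fun T : M => T * star T) '' 𝒮) ∧
        star V * D * V ∈ Submonoid.closure
          ((fun T : M => star T * T) '' 𝒮 ∪ (fun T : M => T * star T) '' 𝒮)} := by
      rw [hR3]; exact hV
    obtain ⟨hVpi, hVc⟩ := hV3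
    have hmem : star V ∈ {V : M | V * star V * V = V ∧ ∀ D ∈ Submonoid.closure
        ((fun T : M => star T * T) '' 𝒮 ∪ (fun T : M => T * star T) '' 𝒮),
        V * D * star V ∈ Submonoid.closure
          ((fun T : M => star T * T) '' 𝒮 ∪ (fun T : M => T * star T) '' 𝒮) ∧
        star V * D * V ∈ Submonoid.closure
          ((fun T : M => star T * T) '' 𝒮 ∪ (fun T : M => T * star T) '' 𝒮)} := by
      constructor
      · rw [star_star]; exact hsss V hV
      · intro D hD
        constructor
        · rw [star_star]; exact (hVc D hD).2
        · rw [star_star]; exact (hVc D hD).1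
    rwa [hR3] at hmem
  ext x
  simp only [Set.mem_image]
  constructor
  · rintro ⟨T, hT, rfl⟩
    exact hstar𝒮 T hT
  · intro hx
    exact ⟨star x, hstar𝒮 x hx, star_star x⟩

end Main

/-- Theorem 2.9: a maximal unital semigroup `𝒮` of partial isometries whose initial
and final projections `P(𝒮) ∪ Q(𝒮)` form a commutative family is selfadjoint:
`𝒮* = 𝒮`. -/
theorem maximal_semigroup_selfadjoint {H : Type*} [NormedAddCommGroup H]
    [InnerProductSpace ℂ H] [CompleteSpace H] (𝒮 : Set (H →L[ℂ] H))
    (hmul : ∀ A ∈ 𝒮, ∀ B ∈ 𝒮, A * B ∈ 𝒮)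
    (hone : (1 : H →L[ℂ] H) ∈ 𝒮)
    (hpi : ∀ A ∈ 𝒮, A * star A * A = A)
    (hmax : ∀ ℛ : Set (H →L[ℂ] H),
      (∀ A ∈ ℛ, ∀ B ∈ ℛ, A * B ∈ ℛ) → (∀ A ∈ ℛ, A * star A * A = A) →
      𝒮 ⊆ ℛ → ℛ = 𝒮)
    (hPQcomm : ∀ A ∈ ((fun T => star T * T) '' 𝒮 ∪ (fun T => T * star T) '' 𝒮),
      ∀ B ∈ ((fun T => star T * T) '' 𝒮 ∪ (fun T => T * star T) '' 𝒮),
        A * B = B * A) :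
    (fun T => star T) '' 𝒮 = 𝒮 := star_image_eq_of_max 𝒮 hmul hone hpi hmax hPQcomm
end

section
/- Let S be a semigroup of partial isometries on a complex Hilbert space H, and let R be a nonzero projection in P(S) ∪ Q(S) that is minimal in P(S) ∪ Q(S), i.e. every projection P in P(S) ∪ Q(S) with P R = P satisfies P = 0 or P = R. If A is an element of S with A A* = R, then either A*A = R or (A*A) R = 0. -/
/-- A step in the proof of Theorem 2.11: if `R` is a nonzero minimal projection in
`P(𝒮) ∪ Q(𝒮)` for a semigroup `𝒮` of partial isometries, and `A ∈ 𝒮` satisfies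
`A A* = R`, then either `A* A = R` or `(A* A) R = 0`. -/
theorem minimal_projection_dichotomy {H : Type*} [NormedAddCommGroup H]
    [InnerProductSpace ℂ H] [CompleteSpace H] (𝒮 : Set (H →L[ℂ] H))
    (hmul : ∀ A ∈ 𝒮, ∀ B ∈ 𝒮, A * B ∈ 𝒮)
    (hpi : ∀ A ∈ 𝒮, A * star A * A = A)
    (R : H →L[ℂ] H)
    (hR : R ∈ ((fun T => star T * T) '' 𝒮 ∪ (fun T => T * star T) '' 𝒮))
    (hR0 : R ≠ 0)
    (hmin : ∀ P ∈ ((fun T => star T * T) '' 𝒮 ∪ (fun T => T * star T) '' 𝒮),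
      P * R = P → P = 0 ∨ P = R)
    (A : H →L[ℂ] H) (hA : A ∈ 𝒮) (hAR : A * star A = R) :
    star A * A = R ∨ (star A * A) * R = 0 := by
  have hA2 : A * A ∈ 𝒮 := hmul A hA A hA
  have ha : A * star A * A = A := hpi A hA
  -- right-associated versions
  have ha1 : A * (star A * A) = A := by rw [← mul_assoc]; exact ha
  have ha2 : star A * (A * star A) = star A := by
    have := congrArg star ha
    simpa [star_mul, mul_assoc] using this
  -- the final projection of A² = A*A
  set Q' : H →L[ℂ] H := A * A * (star A * star A) with hQ'
  have hQ'mem : Q' ∈ ((fun T => star T * T) '' 𝒮 ∪ (fun T => T * star T) '' 𝒮) := by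
    right
    exact ⟨A * A, hA2, by simp [hQ', star_mul]⟩
  have hQ'R : Q' * R = Q' := by
    rw [← hAR, hQ']
    simp only [mul_assoc, ha2]
  rcases hmin Q' hQ'mem hQ'R with h0 | hQR
  · -- Q' = 0 : then A² = 0, hence (A*A)·R = 0
    right
    have hAA : A * A = 0 := by
      have : (A * A) * star (A * A) = 0 := by
        rw [star_mul]; exact h0
      exact (CStarRing.mul_star_self_eq_zero_iff _).mp this
    rw [← hAR]
    calc star A * A * (A * star A) = star A * (A * A) * star A := by
          simp only [mul_assoc]
      _ = 0 := by rw [hAA, mul_zero, zero_mul]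
  · -- Q' = R : then P R P = P where P = A*A, hence P R = P, and minimality of P finishes
    have hPmem : star A * A ∈ ((fun T => star T * T) '' 𝒮 ∪ (fun T => T * star T) '' 𝒮) :=
      Or.inl ⟨A, hA, rfl⟩
    have hPstar : star (star A * A) = star A * A := by simp [star_mul]
    have hRstar : star R = R := by rw [← hAR]; simp [star_mul]
    have hPP : (star A * A) * (star A * A) = star A * A := by
      simp only [mul_assoc, ha1]
    have hRR : R * R = R := by
      rw [← hAR]; simp only [mul_assoc, ha2]
    have hPRP : (star A * A) * R * (star A * A) = star A * A := by
      have h := congrArg (fun X => star A * X * A) hQR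
      simp only [hQ'] at h
      calc (star A * A) * R * (star A * A)
          = star A * (A * R * star A) * A := by simp only [mul_assoc]
        _ = star A * (A * A * (star A * star A)) * A := by
            rw [← hAR]; simp only [mul_assoc]
        _ = star A * R * A := h
        _ = star A * A := by rw [← hAR]; simp only [mul_assoc, ha2]
    have hPR : (star A * A) * R = star A * A := by
      have key : ((star A * A) * R - star A * A) * star ((star A * A) * R - star A * A) = 0 := by
        rw [star_sub, star_mul, hPstar, hRstar]
        have e1 : (star A * A) * R * (R * (star A * A)) = star A * A := by
          rw [show (star A * A) * R * (R * (star A * A))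
              = (star A * A) * (R * R) * (star A * A) by simp only [mul_assoc], hRR, hPRP]
        have e3 : (star A * A) * (R * (star A * A)) = star A * A := by
          rw [← mul_assoc]; exact hPRP
        rw [mul_sub, sub_mul, sub_mul, e1, hPRP, e3, hPP]
        abel
      have := (CStarRing.mul_star_self_eq_zero_iff _).mp key
      exact sub_eq_zero.mp this
    rcases hmin (star A * A) hPmem hPR with h0 | hPeqR
    · right; rw [h0, zero_mul]
    · left; exact hPeqR
end
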